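/- arXiv:2109.14142 — 3 statements merged into one kernel-verified Lean document; each statement's English description precedes it below -/
import Mathlib

section
/- Let x_1, …, x_n ∈ ℝ^d, let p ∈ ℕ, and let K_p ∈ ℝ^{n×n} be the matrix with (K_p)_{ij} = (x_iᵀx_j)^p. Suppose M ∈ ℝ^{n×n} is a symmetric positive definite matrix and α > 0 is such that M ⪰ α²·K_p. Then for any β ∈ ℝ^d, letting y = ((βᵀx_1)^p, …, (βᵀx_n)^p) ∈ ℝ^n, one has √(yᵀ M^{−1} y) ≤ ‖β‖₂^p / α. -/
/-!
The kernel `(x_iᵀx_j)^p` is the inner product of the tensor powers `x_i^{⊗p}`, `x_j^{⊗p}`, so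
`K_p` is a Gram matrix and `y_i = ⟪β^{⊗p}, x_i^{⊗p}⟫`. With `z = M⁻¹y` and
`w = ∑ z_i x_i^{⊗p}`, Cauchy–Schwarz gives `yᵀM⁻¹y = ⟪β^{⊗p}, w⟫ ≤ ‖β‖^p ‖w‖`, while the
domination gives `α² ‖w‖² = α² zᵀK_p z ≤ zᵀMz = yᵀM⁻¹y`; together `yᵀM⁻¹y ≤ ‖β‖^{2p} / α²`.
-/

open Matrix
open scoped InnerProductSpace
open scoped BigOperators

noncomputable section

/-- Euclidean norm of a vector in `ℝ^d`. -/
def vnorm {d : ℕ} (v : Fin d → ℝ) : ℝ := Real.sqrt (∑ j, v j ^ 2)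

namespace Matrix.PosDef

variable {n E : Type*} [Fintype n] [DecidableEq n] [NormedAddCommGroup E] [InnerProductSpace ℝ E]

theorem mul_dotProduct_inv_mulVec_le_norm_sq {M : Matrix n n ℝ} (hM : M.PosDef) {v : n → E}
    {c : ℝ} (hc : 0 ≤ c) (hdom : (M - c • gram ℝ v).PosSemidef) (u : E) :
    c * ((fun i => ⟪u, v i⟫_ℝ) ⬝ᵥ M⁻¹ *ᵥ fun i => ⟪u, v i⟫_ℝ) ≤ ‖u‖ ^ 2 := by
  set y : n → ℝ := fun i => ⟪u, v i⟫_ℝ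
  set z := M⁻¹ *ᵥ y
  set w := ∑ i, z i • v i
  have hMz : M *ᵥ z = y := by
    rw [mulVec_mulVec, mul_nonsing_inv M (isUnit_iff_ne_zero.mpr hM.det_pos.ne'), one_mulVec]
  have hyz : y ⬝ᵥ z = ⟪u, w⟫_ℝ := by
    simp only [w, inner_sum, inner_smul_right, dotProduct, y, mul_comm]
  have hw : c * ‖w‖ ^ 2 ≤ y ⬝ᵥ z := by
    have h := hdom.dotProduct_mulVec_nonneg z
    rw [star_trivial, sub_mulVec, dotProduct_sub, smul_mulVec, dotProduct_smul, smul_eq_mul,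
      ← star_trivial z, star_dotProduct_gram_mulVec, star_trivial, hMz, dotProduct_comm,
      real_inner_self_eq_norm_sq] at h
    linarith
  have hcs : ⟪u, w⟫_ℝ ≤ ‖u‖ * ‖w‖ := real_inner_le_norm u w
  rw [hyz] at hw ⊢
  -- `c⟪u, w⟫ ≤ (‖u‖² + c²‖w‖²) / 2 ≤ (‖u‖² + c⟪u, w⟫) / 2`
  nlinarith [sq_nonneg (‖u‖ - c * ‖w‖), mul_le_mul_of_nonneg_left hcs hc]

end Matrix.PosDef

section
variable {ι : Type*}

def tensorPowerFeature (p : ℕ) (v : ι → ℝ) : EuclideanSpace ℝ (Fin p → ι) :=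
  WithLp.toLp 2 fun f => ∏ i, v (f i)

variable [Fintype ι]

theorem inner_tensorPowerFeature (p : ℕ) (v w : ι → ℝ) :
    ⟪tensorPowerFeature p v, tensorPowerFeature p w⟫_ℝ = (v ⬝ᵥ w) ^ p := by
  simp only [tensorPowerFeature, EuclideanSpace.inner_toLp_toLp, dotProduct, Fintype.sum_pow,
    Finset.prod_mul_distrib, star_trivial, mul_comm]

theorem norm_tensorPowerFeature (p : ℕ) (v : ι → ℝ) :
    ‖tensorPowerFeature p v‖ = ‖WithLp.toLp 2 v‖ ^ p := by
  refine (pow_left_inj₀ (norm_nonneg _) (by positivity) two_ne_zero).mp ?_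
  rw [← real_inner_self_eq_norm_sq, inner_tensorPowerFeature, ← pow_mul, mul_comm, pow_mul,
    ← real_inner_self_eq_norm_sq]
  rfl

end

/-- If a symmetric positive definite matrix `M` dominates `α² K_p`, where
`(K_p)_{ij} = (x_iᵀx_j)^p`, then for `y = ((βᵀx_1)^p, …, (βᵀx_n)^p)` one has
`√(yᵀ M⁻¹ y) ≤ ‖β‖₂^p / α`. -/
theorem kernel_domination_complexity (n d p : ℕ) (x : Fin n → Fin d → ℝ)
    (M : Matrix (Fin n) (Fin n) ℝ) (α : ℝ) (hα : 0 < α) (hM : M.PosDef)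
    (hdom : (M - α ^ 2 • Matrix.of fun i j => (∑ k, x i k * x j k) ^ p).PosSemidef)
    (β : Fin d → ℝ) :
    Real.sqrt ((fun i => (∑ k, β k * x i k) ^ p) ⬝ᵥ
        M⁻¹.mulVec fun i => (∑ k, β k * x i k) ^ p) ≤ vnorm β ^ p / α := by
  have hK : (Matrix.of fun i j => (∑ k, x i k * x j k) ^ p)
      = gram ℝ fun i => tensorPowerFeature p (x i) := by
    ext i j
    exact (inner_tensorPowerFeature p (x i) (x j)).symm
  have hy : (fun i => (∑ k, β k * x i k) ^ p)
      = fun i => ⟪tensorPowerFeature p β, tensorPowerFeature p (x i)⟫_ℝ :=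
    funext fun i => (inner_tensorPowerFeature p β (x i)).symm
  have hβ : vnorm β = ‖WithLp.toLp 2 β‖ := by
    simp [vnorm, EuclideanSpace.norm_eq]
  rw [hK] at hdom
  rw [hy, hβ, ← norm_tensorPowerFeature]
  refine Real.sqrt_le_iff.mpr ⟨by positivity, ?_⟩
  rw [div_pow, le_div_iff₀ (by positivity), mul_comm]
  exact hM.mul_dotProduct_inv_mulVec_le_norm_sq (sq_nonneg α) hdom _

end
end

section
/- Let X_1, X_2 ∈ ℝ^d be unit vectors and z = X_1ᵀX_2. For w a standard Gaussian vector in ℝ^d (w ∼ N(0, I_d)): (1) E[√2·max(0, wᵀX_1) · √2·max(0, wᵀX_2)] = (√(1−z²) + (π − arccos z)·z)/π; and (2) E[√2·1{wᵀX_1 > 0} · √2·1{wᵀX_2 > 0}] = (π − arccos z)/π. -/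
/-!
By rotation invariance of the standard Gaussian, the pair `(⟪w, X₁⟫, ⟪w, X₂⟫)` has the law of
`(q₁, cos θ q₁ + sin θ q₂)` with `q₁, q₂` independent standard Gaussians and `θ = arccos z`: both
are images of standard Gaussians under linear maps with the same Gram matrix, hence have the same
characteristic function. In polar coordinates `q = r (cos φ, sin φ)` the second coordinate is
`r cos (φ - θ)`, and both integrands are positively homogeneous (of degree `1` and `0`), so the
integral splits into the radial moment `∫ r ^ (2n+1) e^(-r²/2) dr = 2ⁿ n!` and the angular integral
of `g (cos φ) g (cos (φ - θ))`, which lives on the arc `θ - π/2 < φ < π/2` of length `π - θ`.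
-/

open MeasureTheory ProbabilityTheory
open scoped Real BigOperators NNReal

noncomputable section

/-- Euclidean dot product. -/
def vdot {d : ℕ} (u v : Fin d → ℝ) : ℝ := ∑ j, u j * v j

/-- The standard Gaussian measure `N(0, I_d)` on `ℝ^d`. -/
def stdGauss (d : ℕ) : Measure (Fin d → ℝ) :=
  Measure.pi fun _ => gaussianReal 0 1

open Real Set WithLp
open scoped RealInnerProductSpace

section Gram

variable {E F : Type*} [NormedAddCommGroup E] [InnerProductSpace ℝ E] [NormedAddCommGroup F]
  [InnerProductSpace ℝ F]

lemma norm_smul_add_smul_eq_of_gram_eq {u v : E} {u' v' : F} (hu : ‖u‖ = ‖u'‖) (hv : ‖v‖ = ‖v'‖)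
    (huv : ⟪u, v⟫ = ⟪u', v'⟫) (a b : ℝ) : ‖a • u + b • v‖ = ‖a • u' + b • v'‖ := by
  rw [← sq_eq_sq₀ (norm_nonneg _) (norm_nonneg _), norm_add_sq_real, norm_add_sq_real,
    norm_smul, norm_smul, norm_smul, norm_smul, real_inner_smul_left, real_inner_smul_left,
    real_inner_smul_right, real_inner_smul_right, hu, hv, huv]

lemma comp_innerSL_prod_innerSL (u v : E) (L : StrongDual ℝ (ℝ × ℝ)) :
    L.comp ((innerSL ℝ u).prod (innerSL ℝ v)) = innerSL ℝ (L (1, 0) • u + L (0, 1) • v) := by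
  ext x
  have hx : ((⟪u, x⟫, ⟪v, x⟫) : ℝ × ℝ) = ⟪u, x⟫ • (1, 0) + ⟪v, x⟫ • (0, 1) := by simp
  rw [innerSL_apply_apply, ContinuousLinearMap.comp_apply, ContinuousLinearMap.prod_apply,
    innerSL_apply_apply, innerSL_apply_apply, hx, map_add, map_smul, map_smul, inner_add_left,
    real_inner_smul_left, real_inner_smul_left, smul_eq_mul, smul_eq_mul]
  ring

variable [FiniteDimensional ℝ E] [MeasurableSpace E] [BorelSpace E]
  [FiniteDimensional ℝ F] [MeasurableSpace F] [BorelSpace F]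

lemma stdGaussian_map_inner_pair_eq_of_gram_eq {u v : E} {u' v' : F} (hu : ‖u‖ = ‖u'‖)
    (hv : ‖v‖ = ‖v'‖) (huv : ⟪u, v⟫ = ⟪u', v'⟫) :
    (stdGaussian E).map (fun x ↦ (⟪u, x⟫, ⟪v, x⟫))
      = (stdGaussian F).map (fun y ↦ (⟪u', y⟫, ⟪v', y⟫)) := by
  refine Measure.ext_of_charFunDual (funext fun L ↦ ?_)
  change charFunDual ((stdGaussian E).map ((innerSL ℝ u).prod (innerSL ℝ v))) L
    = charFunDual ((stdGaussian F).map ((innerSL ℝ u').prod (innerSL ℝ v'))) L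
  rw [charFunDual_map, charFunDual_map, comp_innerSL_prod_innerSL, comp_innerSL_prod_innerSL,
    charFunDual_stdGaussian, charFunDual_stdGaussian, innerSL_apply_norm, innerSL_apply_norm,
    norm_smul_add_smul_eq_of_gram_eq hu hv huv]

lemma integral_stdGaussian_comp_inner_pair_of_gram_eq {u v : E} {u' v' : F} (hu : ‖u‖ = ‖u'‖)
    (hv : ‖v‖ = ‖v'‖) (huv : ⟪u, v⟫ = ⟪u', v'⟫) {f : ℝ × ℝ → ℝ} (hf : Measurable f) :
    ∫ x, f (⟪u, x⟫, ⟪v, x⟫) ∂stdGaussian E = ∫ y, f (⟪u', y⟫, ⟪v', y⟫) ∂stdGaussian F := by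
  rw [← integral_map (by fun_prop) hf.aestronglyMeasurable,
    stdGaussian_map_inner_pair_eq_of_gram_eq hu hv huv,
    integral_map (by fun_prop) hf.aestronglyMeasurable]

end Gram

lemma integral_pi_gaussianReal_eq_integral_stdGaussian {ι : Type*} [Fintype ι]
    (f : (ι → ℝ) → ℝ) :
    ∫ w, f w ∂Measure.pi (fun _ : ι ↦ gaussianReal 0 1)
      = ∫ x, f (ofLp x) ∂stdGaussian (EuclideanSpace ℝ ι) := by
  rw [← map_pi_eq_stdGaussian, ← MeasurableEquiv.coe_toLp, integral_map_equiv]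
  rfl

lemma gaussianPDFReal_mul_gaussianPDFReal (x y : ℝ) :
    gaussianPDFReal 0 1 x * gaussianPDFReal 0 1 y = (2 * π)⁻¹ * exp (-(x ^ 2 + y ^ 2) / 2) := by
  simp only [gaussianPDFReal_def, NNReal.coe_one, mul_one, sub_zero]
  rw [mul_mul_mul_comm, ← mul_inv, mul_self_sqrt (by positivity), ← exp_add]
  ring_nf

lemma integral_gaussianReal_prod_eq_integral_polarCoord (f : ℝ × ℝ → ℝ) :
    ∫ q, f q ∂(gaussianReal 0 1).prod (gaussianReal 0 1)
      = (2 * π)⁻¹ * ∫ p in polarCoord.target, p.1 * exp (-p.1 ^ 2 / 2) * f (polarCoord.symm p) := by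
  rw [gaussianReal_of_var_ne_zero 0 one_ne_zero,
    prod_withDensity (measurable_gaussianPDF 0 1) (measurable_gaussianPDF 0 1),
    integral_withDensity_eq_integral_toReal_smul (by fun_prop)
      (ae_of_all _ fun _ ↦ ENNReal.mul_lt_top gaussianPDF_lt_top gaussianPDF_lt_top),
    ← Measure.volume_eq_prod, ← integral_comp_polarCoord_symm, ← integral_const_mul]
  refine setIntegral_congr_fun polarCoord.open_target.measurableSet fun p _ ↦ ?_
  have hr : (p.1 * cos p.2) ^ 2 + (p.1 * sin p.2) ^ 2 = p.1 ^ 2 := by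
    linear_combination p.1 ^ 2 * sin_sq_add_cos_sq p.2
  simp only [polarCoord_symm_apply, ENNReal.toReal_mul, toReal_gaussianPDF,
    gaussianPDFReal_mul_gaussianPDFReal, hr, smul_eq_mul]
  ring

lemma integral_Ioi_pow_mul_exp_neg_sq_div_two (n : ℕ) :
    ∫ r in Ioi (0 : ℝ), r ^ (2 * n + 1) * exp (-r ^ 2 / 2) = 2 ^ n * n.factorial := by
  have h := integral_rpow_mul_exp_neg_mul_rpow (p := 2) (q := 2 * n + 1) (b := 1 / 2)
    two_pos (by linarith [n.cast_nonneg (α := ℝ)]) (by norm_num)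
  have hq : (2 * (n : ℝ) + 1 + 1) / 2 = n + 1 := by ring
  rw [hq, show -(2 * (n : ℝ) + 1 + 1) / 2 = -(n + 1) by ring, Gamma_nat_eq_factorial] at h
  convert h using 1
  · refine setIntegral_congr_fun measurableSet_Ioi fun r _ ↦ ?_
    norm_cast
    ring_nf
  · rw [one_div, inv_rpow zero_le_two, ← rpow_neg zero_le_two, neg_neg, rpow_add_one two_ne_zero,
      rpow_natCast]
    ring

lemma integral_gaussianReal_prod_mul_comp_rotation {g : ℝ → ℝ} {n : ℕ}
    (hg : ∀ r > 0, ∀ t, g (r * t) = r ^ n * g t) (θ : ℝ) :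
    ∫ q, g q.1 * g (cos θ * q.1 + sin θ * q.2) ∂(gaussianReal 0 1).prod (gaussianReal 0 1)
      = (2 * π)⁻¹ * (2 ^ n * n.factorial) * ∫ φ in Ioo (-π) π, g (cos φ) * g (cos (φ - θ)) := by
  rw [integral_gaussianReal_prod_eq_integral_polarCoord, polarCoord_target, Measure.volume_eq_prod,
    ← integral_Ioi_pow_mul_exp_neg_sq_div_two, mul_assoc, ← setIntegral_prod_mul]
  congr 1
  refine setIntegral_congr_fun (measurableSet_Ioi.prod measurableSet_Ioo) fun p hp ↦ ?_
  have hrot : cos θ * (p.1 * cos p.2) + sin θ * (p.1 * sin p.2) = p.1 * cos (p.2 - θ) := by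
    rw [cos_sub]; ring
  simp only [polarCoord_symm_apply, hrot, hg p.1 hp.1]
  ring

section Angular

variable {θ : ℝ}

lemma cos_pos_and_cos_sub_pos (h0 : 0 ≤ θ) {φ : ℝ} (hφ : φ ∈ Ioo (θ - π / 2) (π / 2)) :
    0 < cos φ ∧ 0 < cos (φ - θ) :=
  ⟨cos_pos_of_mem_Ioo ⟨by linarith [hφ.1], hφ.2⟩,
    cos_pos_of_mem_Ioo ⟨by linarith [hφ.1], by linarith [hφ.2]⟩⟩

lemma cos_nonpos_or_cos_sub_nonpos (hπ : θ ≤ π) {φ : ℝ}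
    (hφ : φ ∈ Ioo (-π) π \ Ioo (θ - π / 2) (π / 2)) : cos φ ≤ 0 ∨ cos (φ - θ) ≤ 0 := by
  obtain ⟨⟨hl, hr⟩, hout⟩ := hφ
  rw [mem_Ioo, not_and_or, not_lt, not_lt] at hout
  rcases hout with h | h
  · rcases le_or_gt φ (-(π / 2)) with h' | h'
    · left
      rw [← cos_neg]
      exact cos_nonpos_of_pi_div_two_le_of_le (by linarith) (by linarith)
    · right
      rw [← cos_neg, neg_sub]
      exact cos_nonpos_of_pi_div_two_le_of_le (by linarith) (by linarith)
  · exact Or.inl (cos_nonpos_of_pi_div_two_le_of_le h (by linarith))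

lemma setIntegral_Ioo_comp_cos_mul_comp_cos_sub {g : ℝ → ℝ} (hg : ∀ t ≤ 0, g t = 0)
    (h0 : 0 ≤ θ) (hπ : θ ≤ π) :
    ∫ φ in Ioo (-π) π, g (cos φ) * g (cos (φ - θ))
      = ∫ φ in Ioo (θ - π / 2) (π / 2), g (cos φ) * g (cos (φ - θ)) := by
  refine setIntegral_eq_of_subset_of_forall_sdiff_eq_zero measurableSet_Ioo
    (Ioo_subset_Ioo (by linarith [pi_pos]) (by linarith [pi_pos])) fun φ hφ ↦ ?_
  rcases cos_nonpos_or_cos_sub_nonpos hπ hφ with h | h <;> simp [hg _ h]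

lemma integral_max_cos_mul_max_cos_sub (h0 : 0 ≤ θ) (hπ : θ ≤ π) :
    ∫ φ in Ioo (-π) π, max 0 (cos φ) * max 0 (cos (φ - θ)) = ((π - θ) * cos θ + sin θ) / 2 := by
  rw [setIntegral_Ioo_comp_cos_mul_comp_cos_sub (fun _ ↦ max_eq_left) h0 hπ,
    setIntegral_congr_fun measurableSet_Ioo (g := fun φ ↦ (cos θ + cos (2 * φ - θ)) / 2)
      fun φ hφ ↦ ?_]
  · rw [← integral_Ioc_eq_integral_Ioo, ← intervalIntegral.integral_of_le (by linarith [pi_pos])]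
    rw [intervalIntegral.integral_div, intervalIntegral.integral_add intervalIntegrable_const
      ((by fun_prop : Continuous fun φ ↦ cos (2 * φ - θ)).intervalIntegrable _ _),
      intervalIntegral.integral_const, intervalIntegral.integral_comp_mul_sub (f := cos) two_ne_zero,
      integral_cos, show 2 * (π / 2) - θ = π - θ by ring, show 2 * (θ - π / 2) - θ = -(π - θ) by ring,
      sin_neg, sin_pi_sub, smul_eq_mul, smul_eq_mul]
    ring
  · obtain ⟨h1, h2⟩ := cos_pos_and_cos_sub_pos h0 hφ
    show _ = (cos θ + cos (2 * φ - θ)) / 2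
    have hθ : cos θ = cos φ * cos (φ - θ) + sin φ * sin (φ - θ) := by
      rw [← cos_sub, sub_sub_cancel]
    have h2φ : cos (2 * φ - θ) = cos φ * cos (φ - θ) - sin φ * sin (φ - θ) := by
      rw [← cos_add]; ring_nf
    rw [max_eq_right h1.le, max_eq_right h2.le, hθ, h2φ]
    ring

lemma integral_ite_cos_pos_mul_ite_cos_sub_pos (h0 : 0 ≤ θ) (hπ : θ ≤ π) :
    ∫ φ in Ioo (-π) π, (if 0 < cos φ then (1 : ℝ) else 0) * (if 0 < cos (φ - θ) then 1 else 0)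
      = π - θ := by
  rw [setIntegral_Ioo_comp_cos_mul_comp_cos_sub (fun _ h ↦ if_neg (not_lt.2 h)) h0 hπ,
    setIntegral_congr_fun measurableSet_Ioo (g := fun _ ↦ 1) fun φ hφ ↦ ?_]
  · rw [setIntegral_const, measureReal_def, Real.volume_Ioo, smul_eq_mul, mul_one,
      ENNReal.toReal_ofReal (by linarith)]
    ring
  · obtain ⟨h1, h2⟩ := cos_pos_and_cos_sub_pos h0 hφ
    simp [h1, h2]

end Angular

section Coordinates

variable {d : ℕ}

lemma vdot_eq_inner (u v : Fin d → ℝ) : vdot u v = ⟪toLp 2 v, toLp 2 u⟫ := by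
  simp [vdot, PiLp.inner_apply]

lemma vnorm_eq_norm (v : Fin d → ℝ) : vnorm v = ‖toLp 2 v‖ := by
  simp [vnorm, EuclideanSpace.norm_eq]

lemma abs_vdot_le_one {u v : Fin d → ℝ} (hu : vnorm u = 1) (hv : vnorm v = 1) :
    |vdot u v| ≤ 1 := by
  rw [vnorm_eq_norm] at hu hv
  simpa [vdot_eq_inner, hu, hv] using abs_real_inner_le_norm (toLp 2 v) (toLp 2 u)

lemma integral_stdGauss_comp_vdot_pair {X1 X2 : Fin d → ℝ} (h1 : vnorm X1 = 1)
    (h2 : vnorm X2 = 1) {f : ℝ × ℝ → ℝ} (hf : Measurable f) :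
    ∫ w, f (vdot w X1, vdot w X2) ∂stdGauss d
      = ∫ q, f (q.1, cos (arccos (vdot X1 X2)) * q.1 + sin (arccos (vdot X1 X2)) * q.2)
          ∂(gaussianReal 0 1).prod (gaussianReal 0 1) := by
  obtain ⟨hz1, hz2⟩ := abs_le.1 (abs_vdot_le_one h1 h2)
  set θ := arccos (vdot X1 X2)
  rw [vnorm_eq_norm] at h1 h2
  calc ∫ w, f (vdot w X1, vdot w X2) ∂stdGauss d
      = ∫ x, f (⟪toLp 2 X1, x⟫, ⟪toLp 2 X2, x⟫) ∂stdGaussian (EuclideanSpace ℝ (Fin d)) := by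
        simp_rw [stdGauss, integral_pi_gaussianReal_eq_integral_stdGaussian, vdot_eq_inner]
    _ = ∫ y, f (⟪!₂[1, 0], y⟫, ⟪!₂[cos θ, sin θ], y⟫)
          ∂stdGaussian (EuclideanSpace ℝ (Fin 2)) := by
        refine integral_stdGaussian_comp_inner_pair_of_gram_eq ?_ ?_ ?_ hf
        · simp [h1, EuclideanSpace.norm_eq]
        · simp [h2, EuclideanSpace.norm_eq]
        · rw [cos_arccos hz1 hz2]
          simp [vdot, PiLp.inner_apply, mul_comm]
    _ = ∫ q, f (q 0, cos θ * q 0 + sin θ * q 1) ∂Measure.pi (fun _ : Fin 2 ↦ gaussianReal 0 1) := by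
        rw [integral_pi_gaussianReal_eq_integral_stdGaussian]
        simp [PiLp.inner_apply, Fin.sum_univ_two, mul_comm]
    _ = _ := (measurePreserving_finTwoArrow _).integral_comp'
          (g := fun q ↦ f (q.1, cos θ * q.1 + sin θ * q.2))

lemma integral_stdGauss_mul_comp_vdot_of_homogeneous {X1 X2 : Fin d → ℝ}
    (h1 : vnorm X1 = 1) (h2 : vnorm X2 = 1) {g : ℝ → ℝ} {n : ℕ} (hg : Measurable g)
    (hhom : ∀ r > 0, ∀ t, g (r * t) = r ^ n * g t) :
    ∫ w, g (vdot w X1) * g (vdot w X2) ∂stdGauss d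
      = (2 * π)⁻¹ * (2 ^ n * n.factorial)
          * ∫ φ in Ioo (-π) π, g (cos φ) * g (cos (φ - arccos (vdot X1 X2))) :=
  (integral_stdGauss_comp_vdot_pair h1 h2 (f := fun p ↦ g p.1 * g p.2) (by fun_prop)).trans
    (integral_gaussianReal_prod_mul_comp_rotation hhom _)

end Coordinates

/-- Arc-cosine kernel identities: for unit vectors `X₁, X₂` with
`z = X₁ᵀX₂` and `w ∼ N(0, I_d)`,
`E[√2 max(0,wᵀX₁) · √2 max(0,wᵀX₂)] = (√(1-z²) + (π - arccos z) z)/π` and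
`E[√2·1{wᵀX₁>0} · √2·1{wᵀX₂>0}] = (π - arccos z)/π`. -/
theorem gaussian_relu_arccos_kernel (d : ℕ) (X1 X2 : Fin d → ℝ)
    (h1 : vnorm X1 = 1) (h2 : vnorm X2 = 1) :
    (∫ w, (Real.sqrt 2 * max 0 (∑ j, w j * X1 j)) *
        (Real.sqrt 2 * max 0 (∑ j, w j * X2 j)) ∂stdGauss d) =
      (Real.sqrt (1 - vdot X1 X2 ^ 2) +
        (π - Real.arccos (vdot X1 X2)) * vdot X1 X2) / π ∧
    (∫ w, (Real.sqrt 2 * if 0 < ∑ j, w j * X1 j then (1 : ℝ) else 0) *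
        (Real.sqrt 2 * if 0 < ∑ j, w j * X2 j then (1 : ℝ) else 0) ∂stdGauss d) =
      (π - Real.arccos (vdot X1 X2)) / π := by
  obtain ⟨hz1, hz2⟩ := abs_le.1 (abs_vdot_le_one h1 h2)
  have hθ0 : 0 ≤ arccos (vdot X1 X2) := arccos_nonneg _
  have hθπ : arccos (vdot X1 X2) ≤ π := arccos_le_pi _
  have hrelu := integral_stdGauss_mul_comp_vdot_of_homogeneous h1 h2 (g := fun t ↦ max 0 t)
    (n := 1) (by fun_prop) fun r hr t ↦ by simp [mul_max_of_nonneg _ _ hr.le]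
  have hstep := integral_stdGauss_mul_comp_vdot_of_homogeneous h1 h2
    (g := fun t ↦ if 0 < t then (1 : ℝ) else 0) (n := 0)
    (measurable_const.ite measurableSet_Ioi measurable_const)
    fun r hr t ↦ by simp [mul_pos_iff_of_pos_left hr]
  rw [integral_max_cos_mul_max_cos_sub hθ0 hθπ, cos_arccos hz1 hz2, sin_arccos] at hrelu
  rw [integral_ite_cos_pos_mul_ite_cos_sub_pos hθ0 hθπ] at hstep
  have hsqrt2 : ∀ a b : ℝ, √2 * a * (√2 * b) = 2 * (a * b) := fun a b ↦ by
    rw [mul_mul_mul_comm, mul_self_sqrt zero_le_two]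
  simp_rw [hsqrt2, integral_const_mul]
  unfold vdot at hrelu hstep ⊢
  rw [hrelu, hstep]
  constructor <;> field_simp <;> ring

end
end

section
/- Define Γ : [−1, 1] → ℝ by Γ(z) = z + (√(1 − z²) − z·arccos(z))/π (equivalently Γ(z) = (√(1−z²) + (π − arccos z)·z)/π). Then for any initial value K_1 ∈ (0, 1), the sequence defined by K_{l+1} = Γ(K_l) satisfies K_l ∈ (0, 1) for all l, is nondecreasing, and converges to 1 as l → ∞. -/
open scoped Real

/-!
For `z = cos θ` with `θ = arccos z ∈ (0, π]`, the increment `Γ z - z` is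
`(sin θ - θ cos θ) / π`. It is positive because `tan θ > θ` on `(0, π/2)` (and trivially
so for `z ≤ 0`), and it is smaller than `1 - z` because `sin θ < θ ≤ π`. Hence every orbit
starting below `1` increases and stays below `1`; its limit is a fixed point of the
continuous map `Γ`, and the only fixed point in `(-∞, 1]` is `1`.
-/

open Filter Function Set Topology

section Iterate

variable {α : Type*} {f : α → α} {x : α}

lemma Set.MapsTo.monotone_iterate_apply [Preorder α] {s : Set α} (hmaps : MapsTo f s s)
    (hle : ∀ z ∈ s, z ≤ f z) (hx : x ∈ s) : Monotone fun n => f^[n] x :=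
  monotone_nat_of_le_succ fun n => by
    rw [iterate_succ_apply']
    exact hle _ (hmaps.iterate n hx)

theorem tendsto_iterate_of_lt_map [ConditionallyCompleteLinearOrder α] [TopologicalSpace α]
    [OrderTopology α] {b : α} (hcont : Continuous f) (hmaps : MapsTo f (Iio b) (Iio b))
    (hlt : ∀ z < b, z < f z) (hx : x < b) : Tendsto (fun n => f^[n] x) atTop (𝓝 b) := by
  have hmono := hmaps.monotone_iterate_apply (fun z hz => (hlt z hz).le) hx
  have hbdd : BddAbove (range fun n => f^[n] x) :=
    ⟨b, forall_mem_range.2 fun n => (hmaps.iterate n hx).le⟩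
  have hlim := tendsto_atTop_ciSup hmono hbdd
  have hfix : IsFixedPt f (⨆ n, f^[n] x) := isFixedPt_of_tendsto_iterate hlim hcont.continuousAt
  rcases (ciSup_le fun n => (hmaps.iterate n hx).le : ⨆ n, f^[n] x ≤ b).eq_or_lt with hb | hb
  · rwa [hb] at hlim
  · exact absurd hfix.eq (hlt _ hb).ne'

end Iterate

namespace Real

lemma sqrt_one_sub_sq_sub_mul_arccos_pos {z : ℝ} (hz : z < 1) :
    0 < √(1 - z ^ 2) - z * arccos z := by
  have hθ : 0 < arccos z := arccos_pos.2 hz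
  rcases lt_trichotomy z 0 with hneg | rfl | hpos
  · nlinarith [sqrt_nonneg (1 - z ^ 2)]
  · simp
  · have htan := lt_tan hθ (arccos_lt_pi_div_two.2 hpos)
    rw [tan_eq_sin_div_cos, cos_arccos (by linarith) hz.le, sin_arccos, lt_div_iff₀ hpos] at htan
    linarith

lemma sqrt_one_sub_sq_sub_mul_arccos_lt {z : ℝ} (hz : z < 1) :
    √(1 - z ^ 2) - z * arccos z < π * (1 - z) := by
  have hsin : √(1 - z ^ 2) < arccos z := sin_arccos z ▸ sin_lt (arccos_pos.2 hz)
  nlinarith [arccos_le_pi z]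

end Real

/-- The map `Γ`. -/
noncomputable def arccosKernelMap (z : ℝ) : ℝ :=
  z + (√(1 - z ^ 2) - z * Real.arccos z) / π

lemma continuous_arccosKernelMap : Continuous arccosKernelMap := by
  unfold arccosKernelMap
  fun_prop

lemma lt_arccosKernelMap {z : ℝ} (hz : z < 1) : z < arccosKernelMap z :=
  lt_add_of_pos_right z (div_pos (Real.sqrt_one_sub_sq_sub_mul_arccos_pos hz) Real.pi_pos)

lemma arccosKernelMap_lt_one {z : ℝ} (hz : z < 1) : arccosKernelMap z < 1 := by
  have h := (div_lt_iff₀' Real.pi_pos).2 (Real.sqrt_one_sub_sq_sub_mul_arccos_lt hz)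
  unfold arccosKernelMap
  linarith

lemma tendsto_iterate_arccosKernelMap {x : ℝ} (hx : x < 1) :
    Tendsto (fun n => arccosKernelMap^[n] x) atTop (𝓝 1) :=
  tendsto_iterate_of_lt_map continuous_arccosKernelMap (fun _ => arccosKernelMap_lt_one)
    (fun _ => lt_arccosKernelMap) hx

/-- For the arc-cosine iteration map
`Γ(z) = z + (√(1-z²) − z·arccos z)/π`, any sequence with `K_0 ∈ (0,1)` and
`K_{l+1} = Γ(K_l)` stays in `(0,1)`, is nondecreasing, and converges to `1`. -/
theorem arccos_kernel_iteration_tendsto_one (K : ℕ → ℝ)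
    (h0 : K 0 ∈ Set.Ioo (0 : ℝ) 1)
    (hrec : ∀ l : ℕ, K (l + 1) =
      K l + (Real.sqrt (1 - K l ^ 2) - K l * Real.arccos (K l)) / π) :
    (∀ l, K l ∈ Set.Ioo (0 : ℝ) 1) ∧ Monotone K ∧
      Filter.Tendsto K Filter.atTop (nhds 1) := by
  have hK : K = fun l => arccosKernelMap^[l] (K 0) := by
    funext l
    induction l with
    | zero => rfl
    | succ l ih => rw [hrec, iterate_succ_apply', ← ih]; rfl
  have hmaps : MapsTo arccosKernelMap (Iio 1) (Iio 1) := fun _ => arccosKernelMap_lt_one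
  have hmono : Monotone K := hK ▸
    hmaps.monotone_iterate_apply (fun _ hz => (lt_arccosKernelMap hz).le) h0.2
  refine ⟨fun l => ⟨h0.1.trans_le (hmono l.zero_le), ?_⟩, hmono, ?_⟩
  · rw [hK]
    exact hmaps.iterate l h0.2
  · rw [hK]
    exact tendsto_iterate_arccosKernelMap h0.2
end
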